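/- For each m ∈ ℕ and n ∈ ℤ with n ≤ 1, the subspace g^{(m,n)} spanned by {L_i : i ≥ m}, {M_j : j ≥ n}, {Q_{k-1/2} : k ≥ 1}, c1, c2 is a Lie subalgebra of the N=1 BMS superalgebra g. -/
import Mathlib


/-- Basis of the N=1 BMS superalgebra: `L m`, `M m` (even), `Q k` representing
the odd generator `Q_{k+1/2}`, and the central elements `C1`, `C2` (even). -/
inductive BMSGen
  | L : ℤ → BMSGen
  | M : ℤ → BMSGen
  | Q : ℤ → BMSGen
  | C1 : BMSGen
  | C2 : BMSGen
deriving DecidableEq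

/-- Parity: `Q` generators are odd, the rest are even. -/
def BMSGen.parity : BMSGen → ℕ
  | .Q _ => 1
  | _ => 0

open Finsupp in
/-- The bracket of the N=1 BMS superalgebra on basis elements, with values in
the free vector space `BMSGen →₀ ℂ`. -/
noncomputable def bmsBracket : BMSGen → BMSGen → (BMSGen →₀ ℂ)
  | .L m, .L n => ((m : ℂ) - n) • single (.L (m + n)) 1
      + (if m + n = 0 then ((m : ℂ)^3 - m) / 12 else 0) • single .C1 1
  | .L m, .M n => ((m : ℂ) - n) • single (.M (m + n)) 1
      + (if m + n = 0 then ((m : ℂ)^3 - m) / 12 else 0) • single .C2 1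
  | .M n, .L m => -(((m : ℂ) - n) • single (.M (m + n)) 1
      + (if m + n = 0 then ((m : ℂ)^3 - m) / 12 else 0) • single .C2 1)
  | .L m, .Q k => ((m : ℂ) / 2 - ((k : ℂ) + 1/2)) • single (.Q (m + k)) 1
  | .Q k, .L m => -(((m : ℂ) / 2 - ((k : ℂ) + 1/2)) • single (.Q (m + k)) 1)
  | .Q k, .Q l => (2 : ℂ) • single (.M (k + l + 1)) 1
      + (if k + l + 1 = 0 then (((k : ℂ) + 1/2)^2 - 1/4) / 3 else 0) • single .C2 1
  | _, _ => 0

/-- Extension of the bracket linearly in the second argument. -/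
noncomputable def bmsBrR (x : BMSGen) (f : BMSGen →₀ ℂ) : BMSGen →₀ ℂ :=
  f.sum fun y c => c • bmsBracket x y

/-- Extension of the bracket linearly in the first argument. -/
noncomputable def bmsBrL (f : BMSGen →₀ ℂ) (y : BMSGen) : BMSGen →₀ ℂ :=
  f.sum fun x c => c • bmsBracket x y

/-- The generating set of the subalgebra `g^{(m,n)}`: `L_i (i ≥ m)`,
`M_j (j ≥ n)`, `Q_{k-1/2} (k ≥ 1)` (i.e. `Q` indices `≥ 0` in our convention),
and the central elements. -/
def genSet (m : ℕ) (n : ℤ) : Set BMSGen :=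
  {x | match x with
    | .L i => (m : ℤ) ≤ i
    | .M j => n ≤ j
    | .Q k => 0 ≤ k
    | .C1 => True
    | .C2 => True}

/-- For `m ∈ ℕ` and `n ≤ 1`, the subspace `g^{(m,n)}` spanned by
`{L_i : i ≥ m}`, `{M_j : j ≥ n}`, `{Q_{k-1/2} : k ≥ 1}`, `c1`, `c2` is a Lie
subalgebra of the N=1 BMS superalgebra: it is closed under the bracket. -/
theorem genSet_closed_under_bracket (m : ℕ) (n : ℤ) (hn : n ≤ 1) :
    ∀ x y : BMSGen, x ∈ genSet m n → y ∈ genSet m n →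
      bmsBracket x y ∈
        Submodule.span ℂ ((fun g => Finsupp.single g (1 : ℂ)) '' genSet m n) := by
  have hmem : ∀ g : BMSGen, g ∈ genSet m n →
      Finsupp.single g (1 : ℂ) ∈
        Submodule.span ℂ ((fun g => Finsupp.single g (1 : ℂ)) '' genSet m n) :=
    fun g hg => Submodule.subset_span ⟨g, hg, rfl⟩
  intro x y hx hy
  cases x <;> cases y
  case L.L i j =>
    have hi : (m : ℤ) ≤ i := hx
    have hj : (m : ℤ) ≤ j := hy
    exact Submodule.add_mem _
      (Submodule.smul_mem _ _ (hmem (.L (i + j)) (by show (m:ℤ) ≤ i + j; omega)))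
      (Submodule.smul_mem _ _ (hmem .C1 trivial))
  case L.M i j =>
    have hi : (m : ℤ) ≤ i := hx
    have hj : n ≤ j := hy
    exact Submodule.add_mem _
      (Submodule.smul_mem _ _ (hmem (.M (i + j)) (by show n ≤ i + j; omega)))
      (Submodule.smul_mem _ _ (hmem .C2 trivial))
  case M.L j i =>
    have hj : n ≤ j := hx
    have hi : (m : ℤ) ≤ i := hy
    exact Submodule.neg_mem _ (Submodule.add_mem _
      (Submodule.smul_mem _ _ (hmem (.M (i + j)) (by show n ≤ i + j; omega)))
      (Submodule.smul_mem _ _ (hmem .C2 trivial)))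
  case L.Q i k =>
    have hi : (m : ℤ) ≤ i := hx
    have hk : (0 : ℤ) ≤ k := hy
    exact Submodule.smul_mem _ _ (hmem (.Q (i + k)) (by show (0:ℤ) ≤ i + k; omega))
  case Q.L k i =>
    have hk : (0 : ℤ) ≤ k := hx
    have hi : (m : ℤ) ≤ i := hy
    exact Submodule.neg_mem _
      (Submodule.smul_mem _ _ (hmem (.Q (i + k)) (by show (0:ℤ) ≤ i + k; omega)))
  case Q.Q k l =>
    have hk : (0 : ℤ) ≤ k := hx
    have hl : (0 : ℤ) ≤ l := hy
    exact Submodule.add_mem _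
      (Submodule.smul_mem _ _ (hmem (.M (k + l + 1)) (by show n ≤ k + l + 1; omega)))
      (Submodule.smul_mem _ _ (hmem .C2 trivial))
  all_goals exact Submodule.zero_mem _
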